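/- arXiv:1302.3531 — 4 statements merged into one kernel-verified Lean document; each statement's English description precedes it below -/
import Mathlib

section
/- Let 0 ≤ ε ≤ 1/2 and define the graphon ĝ on [0,1]² by ĝ(x,y) = 1/2 + ε if exactly one of x, y is less than 1/2, and ĝ(x,y) = 1/2 - ε if x, y are both less than 1/2 or both at least 1/2. Then e(ĝ) = 1/2, t(ĝ) = 1/8 - ε³, and I(ĝ) = I₀(1/2 + ε). (Hence, combined with the lower bound I(g) ≥ I₀(1/2 + ε) valid for all graphons with e(g)=1/2 and t(g) = 1/8 - ε³, the maximal entropy satisfies s(1/2, t) = -I₀(1/2 + (1/8 - t)^{1/3}) for 0 ≤ t ≤ 1/8.) -/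
/-!
`ĝ` is constant on the four blocks into which the halves `[0, 1/2)` and `[1/2, 1]` cut the square,
and each half has measure `1/2`, so every density of `ĝ` is an average over the `2 × 2` matrix `W`
of its block values (`1/2 - ε` on the diagonal, `1/2 + ε` off it). For triangles the average is
`(p³ + 3pq²)/4` with `p = 1/2 - ε`, `q = 1/2 + ε`, which is `1/8 - ε³`; and `I₀(p) = I₀(q)` since
`I₀(u) = I₀(1 - u)`.
-/

open MeasureTheory Set

/-- `I₀(u) = (1/2)[u ln u + (1-u) ln(1-u)]`; since `Real.log 0 = 0`,
this automatically satisfies the continuous extension `I₀(0) = I₀(1) = 0`. -/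
noncomputable def I0 (u : ℝ) : ℝ :=
  (1/2) * (u * Real.log u + (1 - u) * Real.log (1 - u))

/-- A graphon: a measurable function `[0,1]² → [0,1]`, symmetric on `[0,1]²`. -/
def IsGraphon (g : ℝ → ℝ → ℝ) : Prop :=
  Measurable (Function.uncurry g) ∧
  (∀ x ∈ Icc (0:ℝ) 1, ∀ y ∈ Icc (0:ℝ) 1, g x y = g y x) ∧
  (∀ x ∈ Icc (0:ℝ) 1, ∀ y ∈ Icc (0:ℝ) 1, g x y ∈ Icc (0:ℝ) 1)

/-- Edge density `e(g) = ∫∫ g`. -/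
noncomputable def edgeDensity (g : ℝ → ℝ → ℝ) : ℝ :=
  ∫ x in Icc (0:ℝ) 1, ∫ y in Icc (0:ℝ) 1, g x y

/-- Triangle density `t(g) = ∫∫∫ g(x,y) g(y,z) g(z,x)`. -/
noncomputable def triangleDensity (g : ℝ → ℝ → ℝ) : ℝ :=
  ∫ x in Icc (0:ℝ) 1, ∫ y in Icc (0:ℝ) 1, ∫ z in Icc (0:ℝ) 1,
    g x y * g y z * g z x

/-- Rate function `I(g) = ∫∫ I₀(g(x,y))`. -/
noncomputable def rateFn (g : ℝ → ℝ → ℝ) : ℝ :=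
  ∫ x in Icc (0:ℝ) 1, ∫ y in Icc (0:ℝ) 1, I0 (g x y)


lemma setIntegral_Icc_ite_lt {a b c : ℝ} (hac : a ≤ c) (hcb : c ≤ b) (u v : ℝ) :
    ∫ t in Icc a b, (if t < c then u else v) = (c - a) * u + (b - c) * v := by
  have hdisj : Disjoint (Ico a c) (Icc c b) :=
    Set.disjoint_left.mpr fun t ht ht' => (not_le.mpr ht.2) ht'.1
  have hlow : EqOn (fun t : ℝ => if t < c then u else v) (fun _ => u) (Ico a c) :=
    fun t ht => if_pos ht.2
  have hupp : EqOn (fun t : ℝ => if t < c then u else v) (fun _ => v) (Icc c b) :=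
    fun t ht => if_neg (not_lt.mpr ht.1)
  rw [← Ico_union_Icc_eq_Icc hac hcb,
    setIntegral_union hdisj measurableSet_Icc
      ((integrableOn_const measure_Ico_lt_top.ne).congr_fun hlow.symm measurableSet_Ico)
      ((integrableOn_const measure_Icc_lt_top.ne).congr_fun hupp.symm measurableSet_Icc),
    setIntegral_congr_fun measurableSet_Ico hlow, setIntegral_congr_fun measurableSet_Icc hupp,
    setIntegral_const, setIntegral_const, Real.volume_real_Ico_of_le hac,
    Real.volume_real_Icc_of_le hcb, smul_eq_mul, smul_eq_mul]

lemma I0_one_sub (u : ℝ) : I0 (1 - u) = I0 u := by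
  simp only [I0, sub_sub_cancel]
  ring

noncomputable def lowerHalf (t : ℝ) : Bool := decide (t < 1/2)

lemma measurable_lowerHalf : Measurable lowerHalf :=
  measurable_to_bool <| by
    have hpre : lowerHalf ⁻¹' {true} = Iio (1/2) := by ext t; simp [lowerHalf]
    exact hpre ▸ measurableSet_Iio

lemma integral_comp_lowerHalf (f : Bool → ℝ) :
    ∫ t in Icc (0:ℝ) 1, f (lowerHalf t) = (∑ b, f b) / 2 := by
  have hstep : ∀ t, f (lowerHalf t) = if t < 1/2 then f true else f false := fun t => by
    unfold lowerHalf
    split_ifs with ht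
    · rw [decide_eq_true ht]
    · rw [decide_eq_false ht]
  simp_rw [hstep]
  rw [setIntegral_Icc_ite_lt (by norm_num) (by norm_num), Fintype.sum_bool]
  ring

noncomputable def twoBlock (W : Bool → Bool → ℝ) (x y : ℝ) : ℝ := W (lowerHalf x) (lowerHalf y)

lemma isGraphon_twoBlock {W : Bool → Bool → ℝ} (hsymm : ∀ a b, W a b = W b a)
    (hW : ∀ a b, W a b ∈ Icc (0:ℝ) 1) : IsGraphon (twoBlock W) :=
  ⟨(measurable_of_countable (Function.uncurry W)).comp
      ((measurable_lowerHalf.comp measurable_fst).prodMk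
        (measurable_lowerHalf.comp measurable_snd)),
    fun _ _ _ _ => hsymm _ _, fun _ _ _ _ => hW _ _⟩

lemma edgeDensity_twoBlock (W : Bool → Bool → ℝ) :
    edgeDensity (twoBlock W) = (∑ a, ∑ b, W a b) / 4 := by
  have hinner : ∀ x, ∫ y in Icc (0:ℝ) 1, twoBlock W x y = (∑ b, W (lowerHalf x) b) / 2 :=
    fun x => integral_comp_lowerHalf _
  rw [edgeDensity]
  simp_rw [hinner]
  rw [integral_comp_lowerHalf fun a => (∑ b, W a b) / 2, ← Finset.sum_div]
  ring

lemma triangleDensity_twoBlock (W : Bool → Bool → ℝ) :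
    triangleDensity (twoBlock W) = (∑ a, ∑ b, ∑ c, W a b * W b c * W c a) / 8 := by
  have hz : ∀ x y, ∫ z in Icc (0:ℝ) 1, twoBlock W x y * twoBlock W y z * twoBlock W z x =
      (∑ c, W (lowerHalf x) (lowerHalf y) * W (lowerHalf y) c * W c (lowerHalf x)) / 2 :=
    fun x y => integral_comp_lowerHalf
      fun c => W (lowerHalf x) (lowerHalf y) * W (lowerHalf y) c * W c (lowerHalf x)
  have hy : ∀ x, ∫ y in Icc (0:ℝ) 1,
      (∑ c, W (lowerHalf x) (lowerHalf y) * W (lowerHalf y) c * W c (lowerHalf x)) / 2 =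
      (∑ b, (∑ c, W (lowerHalf x) b * W b c * W c (lowerHalf x)) / 2) / 2 :=
    fun x => integral_comp_lowerHalf
      fun b => (∑ c, W (lowerHalf x) b * W b c * W c (lowerHalf x)) / 2
  rw [triangleDensity]
  simp_rw [hz, hy]
  rw [integral_comp_lowerHalf fun a => (∑ b, (∑ c, W a b * W b c * W c a) / 2) / 2]
  simp only [← Finset.sum_div]
  ring

lemma rateFn_twoBlock (W : Bool → Bool → ℝ) :
    rateFn (twoBlock W) = (∑ a, ∑ b, I0 (W a b)) / 4 :=
  edgeDensity_twoBlock fun a b => I0 (W a b)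

/-- The block graphon `ĝ`, taking value `1/2 + ε` when exactly one of `x, y` is
below `1/2` and `1/2 - ε` otherwise, has `e(ĝ) = 1/2`, `t(ĝ) = 1/8 - ε³` and
`I(ĝ) = I₀(1/2 + ε)`. -/
theorem block_graphon_values (ε : ℝ) (hε0 : 0 ≤ ε) (hε1 : ε ≤ 1/2)
    (ghat : ℝ → ℝ → ℝ)
    (hdef : ∀ x y : ℝ, ghat x y =
      if (x < 1/2 ∧ ¬ y < 1/2) ∨ (¬ x < 1/2 ∧ y < 1/2)
      then 1/2 + ε else 1/2 - ε) :
    IsGraphon ghat ∧ edgeDensity ghat = 1/2 ∧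
      triangleDensity ghat = 1/8 - ε ^ 3 ∧ rateFn ghat = I0 (1/2 + ε) := by
  set W : Bool → Bool → ℝ := fun a b => if a = b then 1/2 - ε else 1/2 + ε
  have hghat : ghat = twoBlock W := by
    ext x y
    rw [hdef, twoBlock, lowerHalf, lowerHalf]
    by_cases hx : x < 1/2 <;> by_cases hy : y < 1/2 <;> simp only [hx, hy, W] <;> simp
  have hI0 : ∀ a b, I0 (W a b) = I0 (1/2 + ε) := fun a b => by
    dsimp only [W]
    split_ifs
    · rw [← I0_one_sub]
      ring_nf
    · rfl
  subst hghat
  refine ⟨isGraphon_twoBlock (fun a b => by simp only [W, eq_comm]) (fun a b => ?_),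
    ?_, ?_, ?_⟩
  · simp only [W]
    split_ifs <;> constructor <;> linarith
  · simp only [edgeDensity_twoBlock, Fintype.sum_bool, W, Bool.true_eq_false, Bool.false_eq_true,
      reduceIte]
    ring
  · simp only [triangleDensity_twoBlock, Fintype.sum_bool, W, Bool.true_eq_false,
      Bool.false_eq_true, reduceIte]
    ring
  · simp only [rateFn_twoBlock, hI0, Fintype.sum_bool]
    ring
end

section
/- Let 0 ≤ t < 1/8, set ε = (1/8 - t)^{1/3}, and let g be a graphon with e(g) = 1/2, t(g) = t, and I(g) = I₀(1/2 + ε) (i.e. g is a minimizer of the rate function under these constraints). Then there exists a measurable set B ⊆ [0,1] with Lebesgue measure 1/2 such that, for almost every (x,y), g(x,y) = 1/2 + ε if exactly one of x, y lies in B, and g(x,y) = 1/2 - ε if x, y are both in B or both outside B. (Equivalently, g agrees, up to a measure-preserving transformation of [0,1], with the block graphon ĝ taking value 1/2+ε on the off-diagonal blocks and 1/2-ε on the diagonal blocks determined by the partition [0,1/2), [1/2,1].) -/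
open MeasureTheory Set

/-!
Write `g = 1/2 + F` and `d x = ∫ F x y dy`. Since `e(g) = 1/2`, expanding the triangle density
gives `t(g) = 1/8 + (3/2) ∫ d² + t(F)`, so `t(F) ≤ -ε³`. Cauchy–Schwarz, once in each variable,
gives `t(F)² ≤ (∫ F²)³`, hence `∫ F² ≥ ε²`. As `I₀(1/2 + s) = ψ(s²)` with `ψ` strictly convex and
increasing, Jensen's inequality and `I(g) = I₀(1/2 + ε)` force `F² = ε²` a.e. Then every product
`F(x,y) F(y,z) F(z,x)` is `≥ -ε³`, so all the inequalities above are equalities: `d = 0` a.e. and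
the product is `-ε³` a.e. At a generic vertex `z` this reads `F(x,y) = -F(z,x) F(z,y) / ε`, i.e.
`g` is the block graphon of `B = {x | g(z,x) < 1/2}`, and `|B| = 1/2` because `d z = 0`.
-/

open Function

section I0

open Real

lemma I0_eq_neg_binEntropy (u : ℝ) : I0 u = -binEntropy u / 2 := by
  simp only [I0, binEntropy, log_inv]
  ring

lemma continuous_I0 : Continuous I0 := by
  rw [show I0 = fun u => -binEntropy u / 2 from funext I0_eq_neg_binEntropy]
  fun_prop

lemma abs_I0_le {u : ℝ} (hu : u ∈ Icc 0 1) : |I0 u| ≤ log 2 / 2 := by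
  rw [I0_eq_neg_binEntropy, abs_div, abs_neg, abs_two,
    abs_of_nonneg (binEntropy_nonneg hu.1 hu.2)]
  exact div_le_div_of_nonneg_right binEntropy_le_log_two zero_le_two

lemma I0_half_add_sqrt_sq (s : ℝ) : I0 (1/2 + √(s ^ 2)) = I0 (1/2 + s) := by
  rw [sqrt_sq_eq_abs]
  rcases abs_choice s with h | h
  · rw [h]
  · rw [h, I0_eq_neg_binEntropy, I0_eq_neg_binEntropy, one_div, binEntropy_two_inv_add,
      sub_neg_eq_add]

lemma strictMonoOn_I0_half_add_sqrt :
    StrictMonoOn (fun u => I0 (1/2 + √u)) (Icc 0 (1/4)) := by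
  intro u hu v hv huv
  have mem : ∀ w ∈ Icc (0 : ℝ) (1/4), 1/2 + √w ∈ Icc 2⁻¹ 1 := fun w hw =>
    ⟨by linarith [sqrt_nonneg w], by
      linarith [(sqrt_le_left (x := w) (by norm_num : (0:ℝ) ≤ 1/2)).2 (by linarith [hw.2])]⟩
  simp only [I0_eq_neg_binEntropy]
  have := binEntropy_strictAntiOn (mem u hu) (mem v hv) (by linarith [sqrt_lt_sqrt hu.1 huv])
  linarith

lemma hasDerivAt_log_half_add_sub_log_half_sub {s : ℝ} (hs : s ∈ Ioo (-(1/2) : ℝ) (1/2)) :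
    HasDerivAt (fun s => log (1/2 + s) - log (1/2 - s)) (1 / (1/4 - s ^ 2)) s := by
  have h1 : (1/2 : ℝ) + s ≠ 0 := by linarith [hs.1]
  have h2 : (1/2 : ℝ) - s ≠ 0 := by linarith [hs.2]
  have := (((hasDerivAt_id s).const_add (1/2)).log h1).sub
    (((hasDerivAt_id s).const_sub (1/2)).log h2)
  refine this.congr_deriv ?_
  simp only [id]
  rw [neg_div, sub_neg_eq_add, div_add_div _ _ h1 h2,
    show (1/4 : ℝ) - s ^ 2 = (1/2 + s) * (1/2 - s) by ring]
  ring

lemma strictConvexOn_log_half_add_sub_log_half_sub :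
    StrictConvexOn ℝ (Ico 0 (1/2)) (fun s => log (1/2 + s) - log (1/2 - s)) := by
  apply StrictMonoOn.strictConvexOn_of_deriv (convex_Ico 0 (1/2))
  · intro s hs
    exact (hasDerivAt_log_half_add_sub_log_half_sub
      ⟨by linarith [hs.1], hs.2⟩).continuousAt.continuousWithinAt
  · rw [interior_Ico]
    intro s hs t ht hst
    rw [(hasDerivAt_log_half_add_sub_log_half_sub ⟨by linarith [hs.1], hs.2⟩).deriv,
      (hasDerivAt_log_half_add_sub_log_half_sub ⟨by linarith [ht.1], ht.2⟩).deriv]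
    apply one_div_lt_one_div_of_lt <;> nlinarith [hs.1, ht.2]

lemma hasDerivAt_I0_half_add_sqrt {u : ℝ} (hu : u ∈ Ioo (0 : ℝ) (1/4)) :
    HasDerivAt (fun u => I0 (1/2 + √u))
      ((log (1/2 + √u) - log (1/2 - √u)) / (4 * √u)) u := by
  have hs0 : 0 < √u := sqrt_pos.2 hu.1
  have hs1 : √u < 1/2 := (sqrt_lt' (by norm_num)).2 (by linarith [hu.2])
  have hv0 : (1/2 : ℝ) + √u ≠ 0 := by linarith
  have hv1 : (1/2 : ℝ) + √u ≠ 1 := by linarith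
  simp only [I0_eq_neg_binEntropy]
  have := ((hasDerivAt_binEntropy hv0 hv1).comp u
    ((hasDerivAt_sqrt hu.1.ne').const_add (1/2))).neg.div_const 2
  refine this.congr_deriv ?_
  rw [show (1 : ℝ) - (1/2 + √u) = 1/2 - √u by ring]
  field_simp
  ring

/-- The derivative `L √u / (4 √u)`, `L s = log (1/2 + s) - log (1/2 - s)`, is a secant slope of
the strictly convex `L` through `L 0 = 0`. -/
lemma strictConvexOn_I0_half_add_sqrt :
    StrictConvexOn ℝ (Icc 0 (1/4)) (fun u => I0 (1/2 + √u)) := by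
  apply StrictMonoOn.strictConvexOn_of_deriv (convex_Icc 0 (1/4))
  · exact (continuous_I0.comp (by fun_prop)).continuousOn
  · rw [interior_Icc]
    intro u hu v hv huv
    have hsv : √v < 1/2 := (sqrt_lt' (by norm_num)).2 (by linarith [hv.2])
    have := strictConvexOn_log_half_add_sub_log_half_sub.secant_strict_mono_aux2
      (left_mem_Ico.2 (by norm_num)) ⟨sqrt_nonneg v, hsv⟩ (sqrt_pos.2 hu.1)
      (sqrt_lt_sqrt hu.1.le huv)
    simp only [add_zero, sub_zero, sub_self] at this
    rw [(hasDerivAt_I0_half_add_sqrt hu).deriv, (hasDerivAt_I0_half_add_sqrt hv).deriv,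
      mul_comm 4, mul_comm 4, ← div_div, ← div_div]
    exact div_lt_div_of_pos_right this (by norm_num)

end I0

lemma sq_integral_mul_le {β : Type*} [MeasurableSpace β] {ν : Measure β} {f g : β → ℝ}
    (hf : Integrable (fun x => f x ^ 2) ν) (hg : Integrable (fun x => g x ^ 2) ν)
    (hfg : Integrable (fun x => f x * g x) ν) :
    (∫ x, f x * g x ∂ν) ^ 2 ≤ (∫ x, f x ^ 2 ∂ν) * ∫ x, g x ^ 2 ∂ν := by
  have hquad : ∀ t : ℝ,
      0 ≤ (∫ x, g x ^ 2 ∂ν) * (t * t) + (2 * ∫ x, f x * g x ∂ν) * t + ∫ x, f x ^ 2 ∂ν := by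
    intro t
    have hexp : ∫ x, (f x + t * g x) ^ 2 ∂ν
        = ∫ x, f x ^ 2 + (2 * t) * (f x * g x) + (t * t) * g x ^ 2 ∂ν := by
      congr 1; ext x; ring
    rw [integral_add (hf.fun_add (hfg.const_mul _)) (hg.const_mul _),
      integral_add hf (hfg.const_mul _),
      integral_const_mul, integral_const_mul] at hexp
    have : 0 ≤ ∫ x, (f x + t * g x) ^ 2 ∂ν := integral_nonneg fun x => sq_nonneg _
    linarith
  have := discrim_le_zero hquad
  rw [discrim] at this
  linarith

section

variable {β γ : Type*} [MeasurableSpace β] [MeasurableSpace γ]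

/-- Uniformly rather than essentially bounded, so that all sections of a bounded kernel are
bounded. -/
structure IsBddMeasurable (f : β → ℝ) : Prop where
  measurable : Measurable f
  exists_bound : ∃ C, ∀ x, |f x| ≤ C

namespace IsBddMeasurable

variable {f g : β → ℝ}

lemma integrable {ν : Measure β} [IsFiniteMeasure ν] (hf : IsBddMeasurable f) :
    Integrable f ν :=
  let ⟨C, hC⟩ := hf.exists_bound
  .of_bound hf.measurable.aestronglyMeasurable C (.of_forall hC)

lemma const (c : ℝ) : IsBddMeasurable fun _ : β => c :=
  ⟨measurable_const, |c|, fun _ => le_rfl⟩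

lemma add (hf : IsBddMeasurable f) (hg : IsBddMeasurable g) :
    IsBddMeasurable fun x => f x + g x :=
  let ⟨C, hC⟩ := hf.exists_bound
  let ⟨D, hD⟩ := hg.exists_bound
  ⟨hf.measurable.add hg.measurable, C + D,
    fun x => (abs_add_le _ _).trans (add_le_add (hC x) (hD x))⟩

lemma mul (hf : IsBddMeasurable f) (hg : IsBddMeasurable g) :
    IsBddMeasurable fun x => f x * g x :=
  let ⟨C, hC⟩ := hf.exists_bound
  let ⟨D, hD⟩ := hg.exists_bound
  ⟨hf.measurable.mul hg.measurable, C * D, fun x => by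
    rw [abs_mul]; exact mul_le_mul (hC x) (hD x) (abs_nonneg _) ((abs_nonneg _).trans (hC x))⟩

lemma sq (hf : IsBddMeasurable f) : IsBddMeasurable fun x => f x ^ 2 := by
  simpa only [pow_two] using hf.mul hf

lemma comp {f : γ → ℝ} (hf : IsBddMeasurable f) {φ : β → γ} (hφ : Measurable φ) :
    IsBddMeasurable fun x => f (φ x) :=
  let ⟨C, hC⟩ := hf.exists_bound
  ⟨hf.measurable.comp hφ, C, fun x => hC (φ x)⟩

lemma integral_prod_right {f : β × γ → ℝ} (hf : IsBddMeasurable f) (ν : Measure γ)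
    [IsFiniteMeasure ν] : IsBddMeasurable fun x => ∫ y, f (x, y) ∂ν :=
  let ⟨C, hC⟩ := hf.exists_bound
  ⟨hf.measurable.stronglyMeasurable.integral_prod_right'.measurable, C * ν.real univ,
    fun _ => by
      rw [← Real.norm_eq_abs]
      exact norm_integral_le_of_norm_le_const
        (.of_forall fun _ => (Real.norm_eq_abs _).trans_le (hC _))⟩

end IsBddMeasurable

end

open Real in
/-- Jensen for `ψ u = I0 (1/2 + √u)`, as `I0 (1/2 + f) = ψ (f²)`:
`ψ (∫ f²) ≤ ∫ I0 (1/2 + f) ≤ ψ (ε²) ≤ ψ (∫ f²)`, strictly unless `f²` is a.e. constant. -/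
lemma sq_ae_eq_of_integral_I0_le {β : Type*} [MeasurableSpace β] {ν : Measure β}
    [IsProbabilityMeasure ν] {f : β → ℝ} {ε : ℝ} (hf : Measurable f) (hf_le : ∀ x, |f x| ≤ 1/2)
    (hε : ε ^ 2 ≤ ∫ x, f x ^ 2 ∂ν) (hI : ∫ x, I0 (1/2 + f x) ∂ν ≤ I0 (1/2 + ε)) :
    ∀ᵐ x ∂ν, f x ^ 2 = ε ^ 2 := by
  set ψ : ℝ → ℝ := fun u => I0 (1/2 + √u)
  set S := ∫ x, f x ^ 2 ∂ν
  have hψ : ∀ s, ψ (s ^ 2) = I0 (1/2 + s) := I0_half_add_sqrt_sq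
  have hψc : Continuous ψ := continuous_I0.comp (by fun_prop)
  have hmem : ∀ x, f x ^ 2 ∈ Icc (0 : ℝ) (1/4) := fun x =>
    ⟨sq_nonneg _, by nlinarith [abs_le.1 (hf_le x)]⟩
  have hf2 : Integrable (fun x => f x ^ 2) ν := (IsBddMeasurable.mk hf ⟨1/2, hf_le⟩).sq.integrable
  have hψf : Integrable (ψ ∘ fun x => f x ^ 2) ν :=
    IsBddMeasurable.integrable ⟨hψc.measurable.comp (hf.pow_const 2), log 2 / 2, fun x => by
      rw [comp_apply, hψ]
      exact abs_I0_le ⟨by linarith [abs_le.1 (hf_le x)], by linarith [abs_le.1 (hf_le x)]⟩⟩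
  have hS : S ∈ Icc (0 : ℝ) (1/4) :=
    ⟨integral_nonneg fun x => (hmem x).1, by
      simpa using integral_mono hf2 (integrable_const (1/4 : ℝ)) fun x => (hmem x).2⟩
  have hε' : ε ^ 2 ∈ Icc (0 : ℝ) (1/4) := ⟨sq_nonneg _, hε.trans hS.2⟩
  have hI' : ∫ x, ψ (f x ^ 2) ∂ν ≤ ψ (ε ^ 2) := by simpa only [hψ] using hI
  rcases strictConvexOn_I0_half_add_sqrt.ae_eq_const_or_map_average_lt hψc.continuousOn
    isClosed_Icc (.of_forall hmem) hf2 hψf with hconst | hlt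
  · rw [average_eq_integral] at hconst
    have hψS : ψ S ≤ ψ (ε ^ 2) := by
      rw [integral_congr_ae (hconst.mono fun x hx => congrArg ψ hx)] at hI'
      simpa only [const_apply, integral_const, probReal_univ, one_smul] using hI'
    have hSε : S = ε ^ 2 :=
      le_antisymm ((strictMonoOn_I0_half_add_sqrt.le_iff_le hS hε').1 hψS) hε
    filter_upwards [hconst] with x hx
    exact hx.trans hSε
  · rw [average_eq_integral, average_eq_integral] at hlt
    have := strictMonoOn_I0_half_add_sqrt.monotoneOn hε' hS hε
    linarith

lemma measure_setOf_neg_eq_half {β : Type*} [MeasurableSpace β] {ν : Measure β}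
    [IsProbabilityMeasure ν] {f : β → ℝ} {ε : ℝ} (hf : Measurable f) (hε : 0 < ε)
    (hsq : ∀ᵐ x ∂ν, f x ^ 2 = ε ^ 2) (hint : ∫ x, f x ∂ν = 0) :
    ν {x | f x < 0} = ENNReal.ofReal (1/2) := by
  set B := {x | f x < 0}
  have hB : MeasurableSet B := measurableSet_lt hf measurable_const
  have hf_eq : f =ᵐ[ν] fun x => ε - 2 * ε * B.indicator 1 x := by
    filter_upwards [hsq] with x hx
    rcases sq_eq_sq_iff_eq_or_eq_neg.1 hx with h | h
    · rw [indicator_of_notMem (by simp [B, h, hε.le])]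
      simp [h]
    · rw [indicator_of_mem (by simp [B, h, hε])]
      simp [h]
      ring
  rw [integral_congr_ae hf_eq, integral_sub (integrable_const _)
    (((integrable_const 1).indicator hB).const_mul _), integral_const, integral_const_mul,
    integral_indicator_one hB, probReal_univ, one_smul] at hint
  have hB_half : ν.real B = 1/2 := by
    have := mul_left_cancel₀ hε.ne' (show ε * (2 * ν.real B) = ε * 1 by linarith)
    linarith
  rw [← hB_half, ofReal_measureReal]

open scoped Classical in
/-- Phrased through `P ↔ a < 0`, `Q ↔ b < 0` so that it applies to set membership with the
classical decidability instance. -/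
lemma eq_ite_of_mul_mul_eq {a b w ε : ℝ} {P Q : Prop} (hε : 0 < ε) (ha : a ^ 2 = ε ^ 2)
    (hb : b ^ 2 = ε ^ 2) (hw : a * b * w = -ε ^ 3) (hP : P ↔ a < 0) (hQ : Q ↔ b < 0) :
    w = if (P ∧ ¬Q) ∨ (¬P ∧ Q) then ε else -ε := by
  have key : ε ^ 3 * (w * ε + a * b) = 0 := by
    linear_combination (a * b) * hw - (w * b ^ 2) * ha - (w * ε ^ 2) * hb
  have hwε : w * ε = -(a * b) := by
    linarith [(mul_eq_zero.1 key).resolve_left (pow_ne_zero 3 hε.ne')]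
  rcases sq_eq_sq_iff_eq_or_eq_neg.1 ha with rfl | rfl <;>
    rcases sq_eq_sq_iff_eq_or_eq_neg.1 hb with rfl | rfl <;>
    simp only [hP, hQ, neg_lt_zero, hε, not_lt.2 hε.le] <;> norm_num <;>
    exact mul_right_cancel₀ hε.ne' (by linear_combination hwε)

namespace Graphon

variable {α : Type*} [MeasurableSpace α]

noncomputable def degree (μ : Measure α) (F : α → α → ℝ) (x : α) : ℝ := ∫ y, F x y ∂μ

noncomputable def codegree (μ : Measure α) (F : α → α → ℝ) (x y : α) : ℝ :=
  ∫ z, F x z * F y z ∂μ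

noncomputable def triangleIntegral (μ : Measure α) (F : α → α → ℝ) : ℝ :=
  ∫ x, ∫ y, ∫ z, F x y * F y z * F z x ∂μ ∂μ ∂μ

section

variable {μ : Measure α} [IsFiniteMeasure μ] {F : α → α → ℝ}

lemma isBddMeasurable_section (hF : IsBddMeasurable (uncurry F)) (x : α) :
    IsBddMeasurable (F x) :=
  hF.comp measurable_prodMk_left

lemma isBddMeasurable_degree (hF : IsBddMeasurable (uncurry F)) :
    IsBddMeasurable (degree μ F) :=
  hF.integral_prod_right μ

lemma isBddMeasurable_codegree (hF : IsBddMeasurable (uncurry F)) :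
    IsBddMeasurable (uncurry (codegree μ F)) :=
  ((hF.comp (measurable_fst.fst.prodMk measurable_snd)).mul
    (hF.comp (measurable_fst.snd.prodMk measurable_snd))).integral_prod_right μ

lemma isBddMeasurable_triple (hF : IsBddMeasurable (uncurry F)) :
    IsBddMeasurable fun r : α × (α × α) => F r.1 r.2.1 * F r.1 r.2.2 * F r.2.1 r.2.2 :=
  ((hF.comp (measurable_fst.prodMk measurable_snd.fst)).mul
    (hF.comp (measurable_fst.prodMk measurable_snd.snd))).mul (hF.comp measurable_snd)

lemma triangleIntegral_eq_integral_mul_codegree (hF : IsBddMeasurable (uncurry F))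
    (hsymm : ∀ x y, F x y = F y x) :
    triangleIntegral μ F = ∫ p, F p.1 p.2 * codegree μ F p.1 p.2 ∂μ.prod μ := by
  have hinner : ∀ x y, ∫ z, F x y * F y z * F z x ∂μ = F x y * codegree μ F x y := by
    intro x y
    rw [codegree, ← integral_const_mul]
    congr 1; ext z; rw [hsymm z x]; ring
  simp_rw [triangleIntegral, hinner]
  exact integral_integral (hF.mul (isBddMeasurable_codegree hF)).integrable

lemma integral_mul_comp_fst (hF : IsBddMeasurable (uncurry F)) {f : α → ℝ}
    (hf : IsBddMeasurable f) :
    ∫ p, F p.1 p.2 * f p.1 ∂μ.prod μ = ∫ x, degree μ F x * f x ∂μ := by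
  rw [← integral_integral (f := fun x y => F x y * f x)
    (hF.mul (hf.comp measurable_fst)).integrable]
  exact integral_congr_ae (.of_forall fun x => integral_mul_const _ _)

lemma integral_mul_comp_snd (hF : IsBddMeasurable (uncurry F)) (hsymm : ∀ x y, F x y = F y x)
    {f : α → ℝ} (hf : IsBddMeasurable f) :
    ∫ p, F p.1 p.2 * f p.2 ∂μ.prod μ = ∫ x, degree μ F x * f x ∂μ := by
  rw [← integral_prod_swap]
  simp only [Prod.fst_swap, Prod.snd_swap, hsymm _ _]
  exact integral_mul_comp_fst hF hf

lemma integral_codegree (hF : IsBddMeasurable (uncurry F)) (hsymm : ∀ x y, F x y = F y x) :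
    ∫ p, codegree μ F p.1 p.2 ∂μ.prod μ = ∫ x, degree μ F x ^ 2 ∂μ := by
  have hrow : ∀ x, ∫ y, codegree μ F x y ∂μ = ∫ z, F x z * degree μ F z ∂μ := by
    intro x
    have hint : Integrable (uncurry fun y z => F x z * F y z) (μ.prod μ) :=
      ((isBddMeasurable_section hF x).comp measurable_snd |>.mul hF).integrable
    simp_rw [codegree, integral_integral_swap hint, integral_const_mul, degree, hsymm _ _]
  have hd := isBddMeasurable_degree (μ := μ) hF
  rw [← integral_integral (isBddMeasurable_codegree hF).integrable]
  simp_rw [hrow]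
  rw [integral_integral (f := fun x z => F x z * degree μ F z)
    (hF.mul (hd.comp measurable_snd)).integrable, integral_mul_comp_snd hF hsymm hd]
  simp_rw [sq]

lemma sq_integral_mul_codegree_le (hF : IsBddMeasurable (uncurry F)) :
    (∫ p, F p.1 p.2 * codegree μ F p.1 p.2 ∂μ.prod μ) ^ 2
      ≤ (∫ p, F p.1 p.2 ^ 2 ∂μ.prod μ) ^ 3 := by
  set r : α → ℝ := fun x => ∫ z, F x z ^ 2 ∂μ
  have hk := isBddMeasurable_codegree (μ := μ) hF
  have hr : IsBddMeasurable r := hF.sq.integral_prod_right μ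
  have hS : ∫ p, F p.1 p.2 ^ 2 ∂μ.prod μ = ∫ x, r x ∂μ :=
    (integral_integral (f := fun x y => F x y ^ 2) hF.sq.integrable).symm
  have hS₀ : 0 ≤ ∫ p, F p.1 p.2 ^ 2 ∂μ.prod μ := integral_nonneg fun _ => sq_nonneg _
  have hk_le : ∀ p : α × α, codegree μ F p.1 p.2 ^ 2 ≤ r p.1 * r p.2 := fun p =>
    sq_integral_mul_le (isBddMeasurable_section hF _).sq.integrable
      (isBddMeasurable_section hF _).sq.integrable
      ((isBddMeasurable_section hF _).mul (isBddMeasurable_section hF _)).integrable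
  calc (∫ p, F p.1 p.2 * codegree μ F p.1 p.2 ∂μ.prod μ) ^ 2
      ≤ (∫ p, F p.1 p.2 ^ 2 ∂μ.prod μ) * ∫ p, codegree μ F p.1 p.2 ^ 2 ∂μ.prod μ :=
        sq_integral_mul_le (ν := μ.prod μ) hF.sq.integrable hk.sq.integrable
          (hF.mul hk).integrable
    _ ≤ (∫ p, F p.1 p.2 ^ 2 ∂μ.prod μ) * ∫ p, r p.1 * r p.2 ∂μ.prod μ :=
        mul_le_mul_of_nonneg_left (integral_mono hk.sq.integrable
          ((hr.comp measurable_fst).mul (hr.comp measurable_snd)).integrable hk_le) hS₀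
    _ = (∫ p, F p.1 p.2 ^ 2 ∂μ.prod μ) ^ 3 := by
        rw [integral_prod_mul, ← hS]
        ring

lemma integral_mul_codegree_eq_integral_triple (hF : IsBddMeasurable (uncurry F))
    (hsymm : ∀ x y, F x y = F y x) :
    ∫ p, F p.1 p.2 * codegree μ F p.1 p.2 ∂μ.prod μ
      = ∫ r, F r.1 r.2.1 * F r.1 r.2.2 * F r.2.1 r.2.2 ∂μ.prod (μ.prod μ) := by
  have hint :
      IsBddMeasurable fun r : (α × α) × α => F r.2 r.1.1 * F r.2 r.1.2 * F r.1.1 r.1.2 :=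
    ((hF.comp (measurable_snd.prodMk measurable_fst.fst)).mul
      (hF.comp (measurable_snd.prodMk measurable_fst.snd))).mul (hF.comp measurable_fst)
  rw [← integral_prod_swap (μ := μ) (ν := μ.prod μ)]
  simp only [Prod.fst_swap, Prod.snd_swap]
  rw [integral_prod _ hint.integrable]
  congr 1; ext p
  rw [codegree, ← integral_const_mul]
  congr 1; ext z
  rw [hsymm z p.1, hsymm z p.2]
  ring

end

section

variable {μ : Measure α} [IsProbabilityMeasure μ] {F : α → α → ℝ} {ε : ℝ}

lemma codegree_const_add (hF : IsBddMeasurable (uncurry F)) (c : ℝ) (x y : α) :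
    codegree μ (fun x y => c + F x y) x y
      = c ^ 2 + c * degree μ F x + c * degree μ F y + codegree μ F x y := by
  have hx : Integrable (F x) μ := (isBddMeasurable_section hF x).integrable
  have hy : Integrable (F y) μ := (isBddMeasurable_section hF y).integrable
  have hxy : Integrable (fun z => F x z * F y z) μ :=
    ((isBddMeasurable_section hF x).mul (isBddMeasurable_section hF y)).integrable
  calc ∫ z, (c + F x z) * (c + F y z) ∂μ
      = ∫ z, (c ^ 2 + c * F x z) + (c * F y z + F x z * F y z) ∂μ := by
        congr 1; ext z; ring
    _ = _ := by
        rw [integral_add ((integrable_const _).fun_add (hx.const_mul c))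
            ((hy.const_mul c).fun_add hxy),
          integral_add (integrable_const _) (hx.const_mul c),
          integral_add (hy.const_mul c) hxy,
          integral_const, integral_const_mul, integral_const_mul]
        simp only [probReal_univ, one_smul, degree, codegree]
        ring

lemma triangleIntegral_const_add (hF : IsBddMeasurable (uncurry F))
    (hsymm : ∀ x y, F x y = F y x) (c : ℝ) :
    triangleIntegral μ (fun x y => c + F x y)
      = c ^ 3 + 3 * c ^ 2 * ∫ x, degree μ F x ∂μ + 3 * c * ∫ x, degree μ F x ^ 2 ∂μ
        + ∫ p, F p.1 p.2 * codegree μ F p.1 p.2 ∂μ.prod μ := by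
  rw [triangleIntegral_eq_integral_mul_codegree ((IsBddMeasurable.const c).add hF)
    (fun x y => by rw [hsymm])]
  simp_rw [codegree_const_add hF]
  set d := degree μ F
  set k := codegree μ F
  have hd : IsBddMeasurable d := isBddMeasurable_degree hF
  have hk : IsBddMeasurable (uncurry k) := isBddMeasurable_codegree hF
  have i₁ : Integrable (fun p : α × α => d p.1) (μ.prod μ) := (hd.comp measurable_fst).integrable
  have i₂ : Integrable (fun p : α × α => d p.2) (μ.prod μ) := (hd.comp measurable_snd).integrable
  have i₃ : Integrable (fun p : α × α => F p.1 p.2) (μ.prod μ) := hF.integrable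
  have i₄ : Integrable (fun p : α × α => k p.1 p.2) (μ.prod μ) := hk.integrable
  have i₅ : Integrable (fun p : α × α => F p.1 p.2 * d p.1) (μ.prod μ) :=
    (hF.mul (hd.comp measurable_fst)).integrable
  have i₆ : Integrable (fun p : α × α => F p.1 p.2 * d p.2) (μ.prod μ) :=
    (hF.mul (hd.comp measurable_snd)).integrable
  have i₇ : Integrable (fun p : α × α => F p.1 p.2 * k p.1 p.2) (μ.prod μ) :=
    (hF.mul hk).integrable
  have iA : Integrable (fun p : α × α => d p.1 + d p.2 + F p.1 p.2) (μ.prod μ) :=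
    (i₁.fun_add i₂).fun_add i₃
  have iB : Integrable (fun p : α × α => k p.1 p.2 + F p.1 p.2 * d p.1 + F p.1 p.2 * d p.2)
    (μ.prod μ) := (i₄.fun_add i₅).fun_add i₆
  have iC : Integrable (fun p : α × α => c ^ 3 + c ^ 2 * (d p.1 + d p.2 + F p.1 p.2))
    (μ.prod μ) := (integrable_const _).fun_add (iA.const_mul _)
  calc ∫ p, (c + F p.1 p.2) * (c ^ 2 + c * d p.1 + c * d p.2 + k p.1 p.2) ∂μ.prod μ
      = ∫ p, c ^ 3 + c ^ 2 * (d p.1 + d p.2 + F p.1 p.2)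
          + c * (k p.1 p.2 + F p.1 p.2 * d p.1 + F p.1 p.2 * d p.2)
          + F p.1 p.2 * k p.1 p.2 ∂μ.prod μ := by
        congr 1; ext p; ring
    _ = c ^ 3
          + c ^ 2 * (∫ p, d p.1 ∂μ.prod μ + ∫ p, d p.2 ∂μ.prod μ + ∫ p, F p.1 p.2 ∂μ.prod μ)
          + c * (∫ p, k p.1 p.2 ∂μ.prod μ + ∫ p, F p.1 p.2 * d p.1 ∂μ.prod μ
            + ∫ p, F p.1 p.2 * d p.2 ∂μ.prod μ)
          + ∫ p, F p.1 p.2 * k p.1 p.2 ∂μ.prod μ := by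
        rw [integral_add (iC.fun_add (iB.const_mul _)) i₇, integral_add iC (iB.const_mul _),
          integral_add (integrable_const _) (iA.const_mul _), integral_const_mul,
          integral_const_mul,
          integral_add (i₁.fun_add i₂) i₃, integral_add i₁ i₂, integral_add (i₄.fun_add i₅) i₆,
          integral_add i₄ i₅, integral_const]
        simp
    _ = _ := by
        rw [integral_fun_fst d, integral_fun_snd d,
          ← integral_integral (f := F) hF.integrable, integral_codegree hF hsymm,
          integral_mul_comp_fst hF hd, integral_mul_comp_snd hF hsymm hd]
        simp only [probReal_univ, one_smul, d, degree, sq]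
        ring

lemma ae_neg_pow_three_le_triple (hε : 0 ≤ ε)
    (hsq : ∀ᵐ p ∂μ.prod μ, F p.1 p.2 ^ 2 = ε ^ 2) :
    ∀ᵐ r ∂μ.prod (μ.prod μ), -ε ^ 3 ≤ F r.1 r.2.1 * F r.1 r.2.2 * F r.2.1 r.2.2 := by
  have h₁ : ∀ᵐ r ∂μ.prod (μ.prod μ), F r.1 r.2.1 ^ 2 = ε ^ 2 :=
    ((MeasurePreserving.id μ).prod measurePreserving_fst).quasiMeasurePreserving.ae hsq
  have h₂ : ∀ᵐ r ∂μ.prod (μ.prod μ), F r.1 r.2.2 ^ 2 = ε ^ 2 :=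
    ((MeasurePreserving.id μ).prod measurePreserving_snd).quasiMeasurePreserving.ae hsq
  have h₃ : ∀ᵐ r ∂μ.prod (μ.prod μ), F r.2.1 r.2.2 ^ 2 = ε ^ 2 :=
    measurePreserving_snd.quasiMeasurePreserving.ae hsq
  filter_upwards [h₁, h₂, h₃] with r h₁ h₂ h₃
  have habs : ∀ {a : ℝ}, a ^ 2 = ε ^ 2 → |a| = ε := fun h => by
    rw [sq_eq_sq_iff_abs_eq_abs, abs_of_nonneg hε] at h; exact h
  have := neg_abs_le (F r.1 r.2.1 * F r.1 r.2.2 * F r.2.1 r.2.2)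
  rwa [abs_mul, abs_mul, habs h₁, habs h₂, habs h₃, ← pow_three'] at this

lemma neg_pow_three_le_integral_mul_codegree (hF : IsBddMeasurable (uncurry F))
    (hsymm : ∀ x y, F x y = F y x) (hε : 0 ≤ ε) (hsq : ∀ᵐ p ∂μ.prod μ, F p.1 p.2 ^ 2 = ε ^ 2) :
    -ε ^ 3 ≤ ∫ p, F p.1 p.2 * codegree μ F p.1 p.2 ∂μ.prod μ := by
  rw [integral_mul_codegree_eq_integral_triple hF hsymm]
  simpa using integral_mono_ae (integrable_const (-ε ^ 3))
    (isBddMeasurable_triple hF).integrable (ae_neg_pow_three_le_triple hε hsq)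

open scoped Classical in
/-- The triangle product is `≥ -ε³` a.e. and integrates to at most `-ε³`, so it is `-ε³` a.e.; at a
generic vertex `z` this determines `F` from the signs of `F z ·`. -/
lemma exists_block_of_sq_ae_eq (hF : IsBddMeasurable (uncurry F))
    (hsymm : ∀ x y, F x y = F y x) (hε : 0 < ε) (hsq : ∀ᵐ p ∂μ.prod μ, F p.1 p.2 ^ 2 = ε ^ 2)
    (hT : ∫ p, F p.1 p.2 * codegree μ F p.1 p.2 ∂μ.prod μ ≤ -ε ^ 3)
    (hd : ∀ᵐ x ∂μ, degree μ F x = 0) :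
    ∃ B, MeasurableSet B ∧ μ B = ENNReal.ofReal (1/2) ∧ ∀ᵐ p ∂μ.prod μ,
      F p.1 p.2 = if (p.1 ∈ B ∧ p.2 ∉ B) ∨ (p.1 ∉ B ∧ p.2 ∈ B) then ε else -ε := by
  set triple := fun r : α × (α × α) => F r.1 r.2.1 * F r.1 r.2.2 * F r.2.1 r.2.2
  have htriple : IsBddMeasurable triple := isBddMeasurable_triple hF
  have htriple_eq : ∀ᵐ r ∂μ.prod (μ.prod μ), triple r = -ε ^ 3 := by
    have hnn : 0 ≤ᵐ[μ.prod (μ.prod μ)] fun r => triple r + ε ^ 3 := by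
      filter_upwards [ae_neg_pow_three_le_triple hε.le hsq] with r hr
      simp only [Pi.zero_apply]; linarith
    have hzero : ∫ r, triple r + ε ^ 3 ∂μ.prod (μ.prod μ) = 0 := by
      rw [integral_add htriple.integrable (integrable_const _), integral_const, probReal_univ,
        one_smul, ← integral_mul_codegree_eq_integral_triple hF hsymm]
      linarith [neg_pow_three_le_integral_mul_codegree hF hsymm hε.le hsq]
    filter_upwards [(integral_eq_zero_iff_of_nonneg_ae hnn
      (htriple.integrable.add (integrable_const _))).1 hzero] with r hr
    simp only [Pi.zero_apply] at hr; linarith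
  obtain ⟨z, hz_tri, hz_sq, hz_deg⟩ := ((Measure.ae_ae_of_ae_prod htriple_eq).and
    ((Measure.ae_ae_of_ae_prod hsq).and hd)).exists
  refine ⟨{x | F z x < 0}, measurableSet_lt (isBddMeasurable_section hF z).measurable
    measurable_const, measure_setOf_neg_eq_half (isBddMeasurable_section hF z).measurable hε
      hz_sq hz_deg, ?_⟩
  filter_upwards [hz_tri, measurePreserving_fst.quasiMeasurePreserving.ae hz_sq,
    measurePreserving_snd.quasiMeasurePreserving.ae hz_sq] with p hp h₁ h₂
  exact eq_ite_of_mul_mul_eq hε h₁ h₂ hp Iff.rfl Iff.rfl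

open scoped Classical in
theorem exists_block_of_centered (hF : Measurable (uncurry F)) (hsymm : ∀ x y, F x y = F y x)
    (hF_le : ∀ x y, |F x y| ≤ 1/2) (hε : 0 < ε) (hE : ∫ x, degree μ F x ∂μ = 0)
    (ht : triangleIntegral μ (fun x y => 1/2 + F x y) = 1/8 - ε ^ 3)
    (hI : ∫ p, I0 (1/2 + F p.1 p.2) ∂μ.prod μ ≤ I0 (1/2 + ε)) :
    ∃ B, MeasurableSet B ∧ μ B = ENNReal.ofReal (1/2) ∧ ∀ᵐ p ∂μ.prod μ,
      F p.1 p.2 = if (p.1 ∈ B ∧ p.2 ∉ B) ∨ (p.1 ∉ B ∧ p.2 ∈ B) then ε else -ε := by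
  have hFb : IsBddMeasurable (uncurry F) := ⟨hF, 1/2, fun p => hF_le p.1 p.2⟩
  set D := ∫ x, degree μ F x ^ 2 ∂μ
  have hT : ∫ p, F p.1 p.2 * codegree μ F p.1 p.2 ∂μ.prod μ = -ε ^ 3 - 3/2 * D := by
    have := triangleIntegral_const_add (μ := μ) hFb hsymm (1/2)
    rw [ht, hE] at this
    linarith
  have hD₀ : 0 ≤ D := integral_nonneg fun _ => sq_nonneg _
  have hS : ε ^ 2 ≤ ∫ p, F p.1 p.2 ^ 2 ∂μ.prod μ := by
    refine (pow_le_pow_iff_left₀ (sq_nonneg ε) (integral_nonneg fun _ => sq_nonneg _)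
      three_ne_zero).1 (le_trans ?_ (sq_integral_mul_codegree_le hFb))
    nlinarith [pow_pos hε 3]
  have hsq : ∀ᵐ p ∂μ.prod μ, F p.1 p.2 ^ 2 = ε ^ 2 :=
    sq_ae_eq_of_integral_I0_le hF (fun p => hF_le p.1 p.2) hS hI
  have hD : D = 0 := by
    linarith [neg_pow_three_le_integral_mul_codegree hFb hsymm hε.le hsq]
  have hd : ∀ᵐ x ∂μ, degree μ F x = 0 := by
    filter_upwards [(integral_eq_zero_iff_of_nonneg (fun _ => sq_nonneg _)
      (isBddMeasurable_degree hFb).sq.integrable).1 hD] with x hx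
    exact pow_eq_zero_iff two_ne_zero |>.1 hx
  exact exists_block_of_sq_ae_eq hFb hsymm hε hsq (by linarith) hd

open scoped Classical in
theorem exists_block_of_integral_I0_le {W : α → α → ℝ} (hW : Measurable (uncurry W))
    (hsymm : ∀ x y, W x y = W y x) (hW01 : ∀ x y, W x y ∈ Icc (0 : ℝ) 1) (hε : 0 < ε)
    (he : ∫ x, ∫ y, W x y ∂μ ∂μ = 1/2) (ht : triangleIntegral μ W = 1/8 - ε ^ 3)
    (hI : ∫ x, ∫ y, I0 (W x y) ∂μ ∂μ ≤ I0 (1/2 + ε)) :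
    ∃ B, MeasurableSet B ∧ μ B = ENNReal.ofReal (1/2) ∧
      ∀ᵐ p ∂μ.prod μ, W p.1 p.2
        = if (p.1 ∈ B ∧ p.2 ∉ B) ∨ (p.1 ∉ B ∧ p.2 ∈ B) then 1/2 + ε else 1/2 - ε := by
  have hWb : IsBddMeasurable (uncurry W) := ⟨hW, 1, fun p => show |W p.1 p.2| ≤ 1 from
    abs_le.2 ⟨by linarith [(hW01 p.1 p.2).1], (hW01 p.1 p.2).2⟩⟩
  have hWi : Integrable (fun x => ∫ y, W x y ∂μ) μ := (hWb.integral_prod_right μ).integrable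
  have hE : ∫ x, degree μ (fun x y => W x y - 1/2) x ∂μ = 0 := by
    simp only [degree, integral_sub (isBddMeasurable_section hWb _).integrable
      (integrable_const _), integral_const, probReal_univ, one_smul]
    rw [integral_sub hWi (integrable_const _), he]
    simp
  have hIW : IsBddMeasurable (uncurry fun x y => I0 (W x y)) :=
    ⟨continuous_I0.measurable.comp hW, Real.log 2 / 2, fun p => abs_I0_le (hW01 p.1 p.2)⟩
  obtain ⟨B, hB, hμB, hblock⟩ := exists_block_of_centered (hW.sub measurable_const)
    (fun x y => by rw [hsymm]) (fun x y => abs_le.2 ⟨by linarith [(hW01 x y).1],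
      by linarith [(hW01 x y).2]⟩) hε hE (by simpa only [add_sub_cancel] using ht)
    (by simpa only [add_sub_cancel, integral_integral hIW.integrable] using hI)
  refine ⟨B, hB, hμB, ?_⟩
  filter_upwards [hblock] with p hp
  rw [← add_sub_cancel (1/2 : ℝ) (W p.1 p.2), hp]
  split_ifs <;> ring

end

end Graphon

lemma IsGraphon.exists_extension {g : ℝ → ℝ → ℝ} (hg : IsGraphon g) :
    ∃ W : ℝ → ℝ → ℝ, Measurable (uncurry W) ∧ (∀ x y, W x y = W y x) ∧
      (∀ x y, W x y ∈ Icc (0 : ℝ) 1) ∧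
      ∀ x ∈ Icc (0 : ℝ) 1, ∀ y ∈ Icc (0 : ℝ) 1, W x y = g x y := by
  obtain ⟨hgm, hsym, hmem⟩ := hg
  refine ⟨fun x y => (Icc 0 1 ×ˢ Icc 0 1).indicator (uncurry g) (x, y),
    hgm.indicator (measurableSet_Icc.prod measurableSet_Icc), fun x y => ?_, fun x y => ?_,
    fun x hx y hy => indicator_of_mem (mk_mem_prod hx hy) _⟩
  · beta_reduce
    by_cases h : x ∈ Icc (0 : ℝ) 1 ∧ y ∈ Icc (0 : ℝ) 1
    · rw [indicator_of_mem (mk_mem_prod h.1 h.2), indicator_of_mem (mk_mem_prod h.2 h.1)]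
      exact hsym x h.1 y h.2
    · rw [indicator_of_notMem (show (x, y) ∉ Icc (0 : ℝ) 1 ×ˢ Icc 0 1 from fun h' => h h'),
        indicator_of_notMem
          (show (y, x) ∉ Icc (0 : ℝ) 1 ×ˢ Icc 0 1 from fun h' => h ⟨h'.2, h'.1⟩)]
  · beta_reduce
    by_cases h : (x, y) ∈ Icc (0 : ℝ) 1 ×ˢ Icc (0 : ℝ) 1
    · rw [indicator_of_mem h]; exact hmem x h.1 y h.2
    · rw [indicator_of_notMem h]; exact ⟨le_rfl, zero_le_one⟩

open scoped Classical

theorem minimizer_is_block_general (t : ℝ) (ht8 : t < 1/8)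
    (ε : ℝ) (hε : ε = (1/8 - t) ^ ((1:ℝ)/3))
    (g : ℝ → ℝ → ℝ) (hg : IsGraphon g)
    (he : edgeDensity g = 1/2) (htg : triangleDensity g = t)
    (hI : rateFn g = I0 (1/2 + ε)) :
    ∃ B : Set ℝ, MeasurableSet B ∧ B ⊆ Icc (0:ℝ) 1 ∧
      volume B = ENNReal.ofReal (1/2) ∧
      ∀ᵐ p : ℝ × ℝ ∂(volume.restrict (Icc (0:ℝ) 1 ×ˢ Icc (0:ℝ) 1)),
        g p.1 p.2 =
          if (p.1 ∈ B ∧ p.2 ∉ B) ∨ (p.1 ∉ B ∧ p.2 ∈ B)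
          then 1/2 + ε else 1/2 - ε := by
  obtain ⟨W, hW, hsymm, hW01, hWg⟩ := hg.exists_extension
  have hε₀ : 0 < ε := hε ▸ Real.rpow_pos_of_pos (by linarith) _
  have hε₃ : ε ^ 3 = 1/8 - t := by
    rw [hε, ← Real.rpow_natCast, ← Real.rpow_mul (by linarith)]; norm_num
  have hcongr : ∀ {f f' : ℝ → ℝ}, EqOn f f' (Icc 0 1) →
      ∫ x in Icc (0 : ℝ) 1, f x = ∫ x in Icc (0 : ℝ) 1, f' x :=
    setIntegral_congr_fun measurableSet_Icc
  have : IsProbabilityMeasure (volume.restrict (Icc (0 : ℝ) 1)) := ⟨by simp⟩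
  obtain ⟨B, hB, hμB, hblock⟩ := Graphon.exists_block_of_integral_I0_le
    (μ := volume.restrict (Icc 0 1)) hW hsymm hW01 hε₀
    (by rw [← he]; exact hcongr fun x hx => hcongr fun y hy => hWg x hx y hy)
    (by
      rw [hε₃, sub_sub_cancel, ← htg, Graphon.triangleIntegral]
      exact hcongr fun x hx => hcongr fun y hy => hcongr fun z hz => by
        rw [hWg x hx y hy, hWg y hy z hz, hWg z hz x hx])
    (by rw [← hI]; exact (hcongr fun x hx => hcongr fun y hy => by rw [hWg x hx y hy]).le)
  refine ⟨B ∩ Icc 0 1, hB.inter measurableSet_Icc, inter_subset_right, ?_, ?_⟩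
  · rwa [← Measure.restrict_apply hB]
  · rw [Measure.volume_eq_prod, ← Measure.prod_restrict]
    filter_upwards [hblock,
      measurePreserving_fst.quasiMeasurePreserving.ae (ae_restrict_mem measurableSet_Icc),
      measurePreserving_snd.quasiMeasurePreserving.ae (ae_restrict_mem measurableSet_Icc)]
      with p hp h₁ h₂
    rw [← hWg _ h₁ _ h₂, hp]
    simp only [mem_inter_iff, h₁, h₂, and_true]

/-- Any minimizer of the rate function with `e(g) = 1/2` and `t(g) = t < 1/8`
is, up to measure-preserving transformation, the bipartite-type block graphon:
there is a set `B` of measure `1/2` such that a.e. `g = 1/2 + ε` across the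
partition `{B, Bᶜ}` and `g = 1/2 - ε` within classes, `ε = (1/8 - t)^{1/3}`. -/
theorem minimizer_is_block (t : ℝ) (ht0 : 0 ≤ t) (ht8 : t < 1/8)
    (ε : ℝ) (hε : ε = (1/8 - t) ^ ((1:ℝ)/3))
    (g : ℝ → ℝ → ℝ) (hg : IsGraphon g)
    (he : edgeDensity g = 1/2) (htg : triangleDensity g = t)
    (hI : rateFn g = I0 (1/2 + ε)) :
    ∃ B : Set ℝ, MeasurableSet B ∧ B ⊆ Icc (0:ℝ) 1 ∧
      volume B = ENNReal.ofReal (1/2) ∧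
      ∀ᵐ p : ℝ × ℝ ∂(volume.restrict (Icc (0:ℝ) 1 ×ˢ Icc (0:ℝ) 1)),
        g p.1 p.2 =
          if (p.1 ∈ B ∧ p.2 ∉ B) ∨ (p.1 ∉ B ∧ p.2 ∈ B)
          then 1/2 + ε else 1/2 - ε :=
  minimizer_is_block_general t ht8 ε hε g hg he htg hI
end

section
/- Let α : [0,1] → ℝ be measurable with ∫_{[0,1]} α(x) dx = 0 and ∫_{[0,1]} α(x)² dx = 1, and let c ∈ ℝ be such that the function g(x,y) = 1/2 + c·α(x)·α(y) takes values in [0,1]. Then g is a graphon with e(g) = 1/2 and t(g) = 1/8 + c³. -/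
open MeasureTheory Set

/-!
Since `α` has mean `0` and second moment `1` on the probability space `[0,1]`, integrating a
quadratic polynomial `p + q α + r α²` in one variable yields `p + r`. Each integrand of `e(g)`
and `t(g)` is such a polynomial in the innermost variable, so the iterated integrals can be
evaluated one variable at a time.
-/

section Moments

variable {Ω : Type*} [MeasurableSpace Ω] {μ : Measure Ω} {f : Ω → ℝ}

theorem integrable_of_integral_sq_ne_zero [IsFiniteMeasure μ] (hf : AEStronglyMeasurable f μ)
    (h : ∫ x, f x ^ 2 ∂μ ≠ 0) : Integrable f μ :=
  ((memLp_two_iff_integrable_sq hf).2 (Integrable.of_integral_ne_zero h)).integrable one_le_two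

theorem integral_eq_of_eq_quadratic [IsProbabilityMeasure μ] (hf : AEStronglyMeasurable f μ)
    (h_mean : ∫ x, f x ∂μ = 0) (h_sq : ∫ x, f x ^ 2 ∂μ = 1) {F : Ω → ℝ} (p q r : ℝ)
    (hF : ∀ x, F x = p + q * f x + r * f x ^ 2) : ∫ x, F x ∂μ = p + r := by
  have hf_int : Integrable f μ := integrable_of_integral_sq_ne_zero hf (by simp [h_sq])
  have hf_sq_int : Integrable (fun x => f x ^ 2) μ :=
    Integrable.of_integral_ne_zero (by simp [h_sq])
  simp_rw [hF]
  rw [integral_add (f := fun x => p + q * f x) ((integrable_const p).add (hf_int.const_mul q))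
      (hf_sq_int.const_mul r),
    integral_add (integrable_const p) (hf_int.const_mul q), integral_const_mul,
    integral_const_mul, h_mean, h_sq]
  simp

end Moments

instance : IsProbabilityMeasure (volume.restrict (Icc (0 : ℝ) 1)) :=
  ⟨by simp [Real.volume_Icc]⟩

/-- A rank-one perturbation of the constant graphon `1/2`: if `α` has mean `0`
and `L²`-norm `1` on `[0,1]` and `g = 1/2 + c α(x) α(y)` takes values in `[0,1]`,
then `g` is a graphon with `e(g) = 1/2` and `t(g) = 1/8 + c³`. -/
theorem rank_one_perturbation (α : ℝ → ℝ) (hα : Measurable α)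
    (hzero : (∫ x in Icc (0:ℝ) 1, α x) = 0)
    (hone : (∫ x in Icc (0:ℝ) 1, (α x) ^ 2) = 1)
    (c : ℝ)
    (hrange : ∀ x ∈ Icc (0:ℝ) 1, ∀ y ∈ Icc (0:ℝ) 1,
      1/2 + c * α x * α y ∈ Icc (0:ℝ) 1) :
    IsGraphon (fun x y => 1/2 + c * α x * α y) ∧
      edgeDensity (fun x y => 1/2 + c * α x * α y) = 1/2 ∧
      triangleDensity (fun x y => 1/2 + c * α x * α y) = 1/8 + c ^ 3 := by
  have integral_quadratic {F : ℝ → ℝ} :=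
    integral_eq_of_eq_quadratic (F := F) hα.aestronglyMeasurable hzero hone
  refine ⟨⟨by fun_prop, fun x _ y _ => by ring, hrange⟩, ?_, ?_⟩
  · have h_edge (a : ℝ) : ∫ y in Icc (0:ℝ) 1, 1/2 + c * a * α y = 1/2 := by
      simpa using integral_quadratic (1/2) (c * a) 0 fun y => by ring
    simp only [edgeDensity, h_edge]
    simp
  · have h_z (a b : ℝ) : ∫ z in Icc (0:ℝ) 1, (1/2 + c * a * b) * (1/2 + c * b * α z) *
        (1/2 + c * α z * a) = 1/8 + (c^2/2 + c/4) * (a * b) + c^3 * (a * b)^2 := by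
      rw [integral_quadratic ((1/2 + c * a * b) / 4) ((1/2 + c * a * b) * (c * a + c * b) / 2)
        ((1/2 + c * a * b) * c^2 * a * b) fun z => by ring]
      ring
    have h_y (a : ℝ) : ∫ y in Icc (0:ℝ) 1,
        1/8 + (c^2/2 + c/4) * (a * α y) + c^3 * (a * α y)^2 = 1/8 + c^3 * a^2 :=
      integral_quadratic _ ((c^2/2 + c/4) * a) (c^3 * a^2) fun y => by ring
    simp only [triangleDensity, h_z, h_y]
    exact integral_quadratic _ 0 (c^3) fun x => by ring
end

section
/- Let 0 < ε < 1/2 and let ĝ be the graphon with ĝ(x,y) = 1/2 + ε if exactly one of x, y is less than 1/2 and ĝ(x,y) = 1/2 - ε otherwise, and set h(x,y) = 3·∫_{[0,1]} ĝ(x,z)·ĝ(y,z) dz. Then real numbers β₁, β₂ satisfy the Euler–Lagrange equation -I₀'(ĝ(x,y)) + β₁ + β₂·h(x,y) = 0 for almost every (x,y) ∈ [0,1]² if and only if β₂ = -(4/3)·β₁ = -(1/(6ε²))·ln((1/2 + ε)/(1/2 - ε)). In particular h(x,y) = 3(1/4 + ε²) where ĝ = 1/2 - ε and h(x,y) = 3(1/4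 - ε²) where ĝ = 1/2 + ε, and the resulting β₁, β₂ diverge as ε ↓ 0. -/
open MeasureTheory Set

/-- `I₀'(u) = (1/2) ln(u/(1-u))`. -/
noncomputable def I0' (u : ℝ) : ℝ := (1/2) * Real.log (u / (1 - u))

/-! The block graphon `ĝ` depends on `(x, y)` only through whether `x` and `y` lie on the same
side of `1/2`, and splitting the `z`-integral at `1/2` shows that its codegree `h` does too. So the
Euler–Lagrange expression is a two-valued step function; since both blocks have positive measure it
vanishes a.e. iff both values vanish. With `I₀'(1/2 ± ε) = ± (1/2) ln((1/2 + ε)/(1/2 - ε))` this is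
a 2×2 linear system for `β₁, β₂`, whose determinant is `6ε² ≠ 0`. -/

theorem integral_Icc_ite_lt {c : ℝ} (hc : c ∈ Icc (0:ℝ) 1) (a b : ℝ) :
    ∫ z in Icc (0:ℝ) 1, (if z < c then a else b) = c * a + (1 - c) * b := by
  have hdisj : Disjoint (Ico (0:ℝ) c) (Icc c 1) :=
    Set.disjoint_left.2 fun z hz hz' => (not_le.2 hz.2) hz'.1
  have below : EqOn (fun z : ℝ => if z < c then a else b) (fun _ => a) (Ico 0 c) :=
    fun z hz => if_pos hz.2
  have above : EqOn (fun z : ℝ => if z < c then a else b) (fun _ => b) (Icc c 1) :=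
    fun z hz => if_neg (not_lt.2 hz.1)
  rw [← Ico_union_Icc_eq_Icc hc.1 hc.2, setIntegral_union hdisj measurableSet_Icc
      ((integrableOn_const (by simp)).congr_fun below.symm measurableSet_Ico)
      ((integrableOn_const (by simp)).congr_fun above.symm measurableSet_Icc),
    setIntegral_congr_fun measurableSet_Ico below, setIntegral_congr_fun measurableSet_Icc above]
  simp [hc.1, hc.2]

noncomputable def halfBlock {α : Type*} (p q : α) (x y : ℝ) : α :=
  if (x < 1/2 ↔ y < 1/2) then p else q

theorem apply_halfBlock {α β : Type*} (f : α → β) (p q : α) (x y : ℝ) :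
    f (halfBlock p q x y) = halfBlock (f p) (f q) x y :=
  apply_ite f _ p q

theorem apply_halfBlock₂ {α β γ : Type*} (f : α → β → γ) (p q : α) (r s : β) (x y : ℝ) :
    f (halfBlock p q x y) (halfBlock r s x y) = halfBlock (f p r) (f q s) x y :=
  apply_ite₂ f _ p q r s

theorem integral_halfBlock_mul_halfBlock (p q x y : ℝ) :
    ∫ z in Icc (0:ℝ) 1, halfBlock p q x z * halfBlock p q y z =
      halfBlock ((p ^ 2 + q ^ 2) / 2) (p * q) x y := by
  have h0 : (0:ℝ) < 1/2 := by norm_num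
  have h1 : ¬ (1:ℝ) < 1/2 := by norm_num
  have hz : ∀ z, halfBlock p q x z * halfBlock p q y z =
      if z < 1/2 then halfBlock p q x 0 * halfBlock p q y 0
      else halfBlock p q x 1 * halfBlock p q y 1 := by
    intro z
    by_cases hz : z < 1/2 <;> simp only [halfBlock, hz, h0, h1, if_true, if_false]
  rw [funext hz, integral_Icc_ite_lt (by norm_num)]
  by_cases hx : x < 1/2 <;> by_cases hy : y < 1/2 <;>
    simp only [halfBlock, hx, hy, h0, h1, iff_self, iff_false, false_iff, if_true, if_false,
      not_true] <;> ring

theorem ite_xor_lt_half_eq_halfBlock {α : Type*} (p q : α) (x y : ℝ) :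
    (if (x < 1/2 ∧ ¬ y < 1/2) ∨ (¬ x < 1/2 ∧ y < 1/2) then q else p) = halfBlock p q x y := by
  unfold halfBlock
  split_ifs <;> first | rfl | (exfalso; tauto)

theorem ae_unitSquare_halfBlock_iff {α : Type*} (P : α → Prop) (p q : α) :
    (∀ᵐ z : ℝ × ℝ ∂(volume.restrict (Icc (0:ℝ) 1 ×ˢ Icc (0:ℝ) 1)),
      P (halfBlock p q z.1 z.2)) ↔ P p ∧ P q := by
  constructor
  · intro hae
    have lower : Ico (0:ℝ) (1/2) ⊆ Icc 0 1 :=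
      Ico_subset_Icc_self.trans (Icc_subset_Icc_right (by norm_num))
    have upper : Ico (1/2:ℝ) 1 ⊆ Icc 0 1 :=
      Ico_subset_Icc_self.trans (Icc_subset_Icc_left (by norm_num))
    have witness : ∀ A B : Set ℝ, A ⊆ Icc 0 1 → B ⊆ Icc 0 1 → volume A ≠ 0 → volume B ≠ 0 →
        ∃ z ∈ A ×ˢ B, P (halfBlock p q z.1 z.2) := fun A B hA hB hA0 hB0 =>
      Measure.exists_mem_of_measure_ne_zero_of_ae
        (by rw [Measure.volume_eq_prod, Measure.prod_prod]; exact mul_ne_zero hA0 hB0)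
        (ae_restrict_of_ae_restrict_of_subset (prod_mono hA hB) hae)
    obtain ⟨z, ⟨hz1, hz2⟩, hPz⟩ := witness _ _ lower lower (by simp) (by simp)
    obtain ⟨w, ⟨hw1, hw2⟩, hPw⟩ := witness _ _ lower upper (by simp) (by norm_num)
    rw [halfBlock, if_pos (iff_of_true hz1.2 hz2.2)] at hPz
    rw [halfBlock, if_neg fun h => not_lt.2 hw2.1 (h.1 hw1.2)] at hPw
    exact ⟨hPz, hPw⟩
  · rintro ⟨hp, hq⟩
    refine Filter.Eventually.of_forall fun z => ?_
    unfold halfBlock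
    split_ifs
    exacts [hp, hq]

theorem I0'_one_sub (u : ℝ) : I0' (1 - u) = -I0' u := by
  rw [I0', I0', sub_sub_cancel, ← inv_div u, Real.log_inv, mul_neg]

theorem I0'_half_add (ε : ℝ) : I0' (1/2 + ε) = (1/2) * Real.log ((1/2 + ε) / (1/2 - ε)) := by
  rw [I0']; ring_nf

theorem I0'_half_sub (ε : ℝ) : I0' (1/2 - ε) = -((1/2) * Real.log ((1/2 + ε) / (1/2 - ε))) := by
  rw [← I0'_half_add, ← I0'_one_sub]; ring_nf

theorem block_linear_system_iff {ε : ℝ} (hε : ε ≠ 0) (L β₁ β₂ : ℝ) :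
    (-(-(1/2 * L)) + β₁ + β₂ * (3 * (1/4 + ε ^ 2)) = 0 ∧
        -(1/2 * L) + β₁ + β₂ * (3 * (1/4 - ε ^ 2)) = 0) ↔
      (β₂ = -(4/3) * β₁ ∧ β₂ = -(1/(6 * ε ^ 2)) * L) := by
  constructor
  · rintro ⟨hsame, hdiff⟩
    refine ⟨by linear_combination (2/3) * hsame + (2/3) * hdiff, ?_⟩
    field_simp
    linear_combination hsame - hdiff
  · rintro ⟨h43, hL⟩
    have hβ₁ : β₁ = -(3/4) * β₂ := by linarith
    subst hβ₁ hL
    constructor <;> field_simp <;> ring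

theorem euler_lagrange_block_general (ε : ℝ) (hε0 : 0 < ε)
    (ghat : ℝ → ℝ → ℝ)
    (hdef : ∀ x y : ℝ, ghat x y =
      if (x < 1/2 ∧ ¬ y < 1/2) ∨ (¬ x < 1/2 ∧ y < 1/2)
      then 1/2 + ε else 1/2 - ε)
    (h : ℝ → ℝ → ℝ)
    (hh : ∀ x y : ℝ, h x y = 3 * ∫ z in Icc (0:ℝ) 1, ghat x z * ghat y z)
    (β₁ β₂ : ℝ) :
    (∀ x ∈ Icc (0:ℝ) 1, ∀ y ∈ Icc (0:ℝ) 1,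
      (ghat x y = 1/2 - ε → h x y = 3 * (1/4 + ε ^ 2)) ∧
      (ghat x y = 1/2 + ε → h x y = 3 * (1/4 - ε ^ 2))) ∧
    ((∀ᵐ p : ℝ × ℝ ∂(volume.restrict (Icc (0:ℝ) 1 ×ˢ Icc (0:ℝ) 1)),
        -I0' (ghat p.1 p.2) + β₁ + β₂ * h p.1 p.2 = 0) ↔
      (β₂ = -(4/3) * β₁ ∧
        β₂ = -(1/(6 * ε ^ 2)) * Real.log ((1/2 + ε) / (1/2 - ε)))) := by
  have hg : ghat = halfBlock (1/2 - ε) (1/2 + ε) := by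
    funext x y
    rw [hdef, ite_xor_lt_half_eq_halfBlock]
  have hcodeg : h = halfBlock (3 * (1/4 + ε ^ 2)) (3 * (1/4 - ε ^ 2)) := by
    funext x y
    rw [hh, hg, integral_halfBlock_mul_halfBlock, apply_halfBlock (3 * ·)]
    congr 1 <;> ring
  subst hg hcodeg
  refine ⟨fun x _ y _ => ?_, ?_⟩
  · unfold halfBlock
    split_ifs <;> constructor <;> intro heq <;> first | rfl | linarith
  · simp only [apply_halfBlock₂ (fun g k => -I0' g + β₁ + β₂ * k)]
    rw [ae_unitSquare_halfBlock_iff (· = 0), I0'_half_sub, I0'_half_add]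
    exact block_linear_system_iff hε0.ne' _ _ _

/-- Euler–Lagrange analysis at the block graphon `ĝ`: the first variation `h` of
the triangle density equals `3(1/4 + ε²)` on diagonal blocks and `3(1/4 - ε²)` on
off-diagonal blocks, and `(β₁, β₂)` solve the Euler–Lagrange equation
`-I₀'(ĝ) + β₁ + β₂ h = 0` a.e. iff
`β₂ = -(4/3)β₁ = -(1/(6ε²)) ln((1/2+ε)/(1/2-ε))`. -/
theorem euler_lagrange_block (ε : ℝ) (hε0 : 0 < ε) (hε1 : ε < 1/2)
    (ghat : ℝ → ℝ → ℝ)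
    (hdef : ∀ x y : ℝ, ghat x y =
      if (x < 1/2 ∧ ¬ y < 1/2) ∨ (¬ x < 1/2 ∧ y < 1/2)
      then 1/2 + ε else 1/2 - ε)
    (h : ℝ → ℝ → ℝ)
    (hh : ∀ x y : ℝ, h x y = 3 * ∫ z in Icc (0:ℝ) 1, ghat x z * ghat y z)
    (β₁ β₂ : ℝ) :
    (∀ x ∈ Icc (0:ℝ) 1, ∀ y ∈ Icc (0:ℝ) 1,
      (ghat x y = 1/2 - ε → h x y = 3 * (1/4 + ε ^ 2)) ∧
      (ghat x y = 1/2 + ε → h x y = 3 * (1/4 - ε ^ 2))) ∧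
    ((∀ᵐ p : ℝ × ℝ ∂(volume.restrict (Icc (0:ℝ) 1 ×ˢ Icc (0:ℝ) 1)),
        -I0' (ghat p.1 p.2) + β₁ + β₂ * h p.1 p.2 = 0) ↔
      (β₂ = -(4/3) * β₁ ∧
        β₂ = -(1/(6 * ε ^ 2)) * Real.log ((1/2 + ε) / (1/2 - ε)))) :=
  euler_lagrange_block_general ε hε0 ghat hdef h hh β₁ β₂
end
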